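/- The map F of the previous statement is compatible with Poisson brackets: with the degree −2 bracket on C•(𝔤,k) determined by {eⁱ, eʲ} = P^{ij}, {eⁱ, ẽʲ} = Q^{ij}, {ẽⁱ, ẽʲ} = 0, and the bracket on C•(𝔥, Sym(𝔥[-1])) given by the canonical pairing ⟨eⁱ, e_j⟩ = δⁱ_j extended as a biderivation, one has F({x,y}) = {F(x), F(y)} for all x, y. -/

import Mathlib

/-!
Both brackets are biderivations vanishing on scalars and `F` is an algebra map, so
`F({x,y}) = {F(x),F(y)}` holds for all elements once it holds on generators. We index the
source generators `eⁱ, ẽⁱ` and the target generators `eⁱ, e_i` by `ι ⊕ ι`; on generators the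
claim says that the bracket matrix of the source is `F J Fᵀ`, where `J` is the matrix of the
canonical pairing. Contracting with `J` pairs the `eⁱ`-component of one image with the
`e_i`-component of the other, and the two halves of `(1/2)P` recombine to `P` by symmetry.
-/

open Finset

variable {k ι : Type*} [Field k] [CharZero k] [Fintype ι] [DecidableEq ι]

/-- Source bracket on generators: `{eⁱ,eʲ} = P^{ij}`, `{eⁱ,ẽʲ} = Q^{ij}`, `{ẽⁱ,ẽʲ} = 0`
(`Sum.inl i ↔ eⁱ`, `Sum.inr i ↔ ẽⁱ`). -/
def sourceBr (P Q : ι → ι → k) : ι ⊕ ι → ι ⊕ ι → k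
  | Sum.inl i, Sum.inl j => P i j
  | Sum.inl i, Sum.inr j => Q i j
  | Sum.inr i, Sum.inl j => Q j i
  | Sum.inr _, Sum.inr _ => 0

/-- Target bracket on generators: the canonical pairing `{eⁱ, e_j} = δⁱ_j`
(`Sum.inl i ↔ eⁱ ∈ 𝔥*`, `Sum.inr i ↔ e_i ∈ 𝔥`). -/
def targetBr : ι ⊕ ι → ι ⊕ ι → k
  | Sum.inl i, Sum.inr j => if i = j then 1 else 0
  | Sum.inr i, Sum.inl j => if i = j then 1 else 0
  | _, _ => 0

/-- The coefficient matrix of `F` on generators: `F(eⁱ) = eⁱ + (1/2)P^{ij} e_j`,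
`F(ẽⁱ) = Q^{ji} e_j`. -/
def Fcoeff (P Q : ι → ι → k) : ι ⊕ ι → ι ⊕ ι → k
  | Sum.inl i, Sum.inl j => if i = j then 1 else 0
  | Sum.inl i, Sum.inr j => (1/2 : k) * P i j
  | Sum.inr _, Sum.inl _ => 0
  | Sum.inr i, Sum.inr j => Q j i

omit [CharZero k] in
theorem sum_sum_mul_targetBr (a b : ι ⊕ ι → k) :
    ∑ u, ∑ v, a u * b v * targetBr u v =
      ∑ i, (a (Sum.inl i) * b (Sum.inr i) + a (Sum.inr i) * b (Sum.inl i)) := by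
  simp [Fintype.sum_sum_type, targetBr, mul_ite, sum_add_distrib, add_comm]

/-- The algebra map `F` is compatible with the Poisson brackets:
`F({x,y}) = {F(x),F(y)}`, equivalently (on generators, since both sides are extended as
graded biderivations over the algebra map `F`):
`Sbr(s,t) = ∑_{u,v} Fc(s,u) Fc(t,v) Tbr(u,v)` for all generators `s, t`. -/
theorem F_bracket_compatible (P Q : ι → ι → k) (hP : ∀ i j, P i j = P j i) :
    ∀ s t : ι ⊕ ι, sourceBr P Q s t =
      ∑ u : ι ⊕ ι, ∑ v : ι ⊕ ι, Fcoeff P Q s u * Fcoeff P Q t v * targetBr u v := by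
  rintro (i | i) (j | j) <;> rw [sum_sum_mul_targetBr]
  · simp only [sourceBr, Fcoeff, one_div, ite_mul, one_mul, zero_mul, mul_ite, mul_one, mul_zero,
      sum_add_distrib, sum_ite_eq, mem_univ, ↓reduceIte, hP j i]
    ring
  all_goals simp [sourceBr, Fcoeff]
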